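/- Let X be a Polish space, R ⊆ C_b(X) a subring that approximates open sets, V a normed R-module and N a local vector measure on V. Then N has bounded variation, i.e. |N|(X) < ∞; more precisely, |N|(A) = ‖N(A)‖' for every Borel set A ⊆ X. -/

import Mathlib

open BoundedContinuousFunction Filter Topology Set MeasureTheory ENNReal
open scoped Function

noncomputable section

/-- A subring `R ⊆ C_b(X)` approximates open sets. -/
structure ApproximatesOpenSets {X : Type*} [TopologicalSpace X] (R : Subring (X →ᵇ ℝ)) : Prop where
  const_mem : ∀ c : ℝ, const X c ∈ R
  sup_mem : ∀ f g : X →ᵇ ℝ, f ∈ R → g ∈ R → ∃ h ∈ R, ∀ x, h x = max (f x) (g x)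
  inf_mem : ∀ f g : X →ᵇ ℝ, f ∈ R → g ∈ R → ∃ h ∈ R, ∀ x, h x = min (f x) (g x)
  const_mul_mem : ∀ (c : ℝ) (f : X →ᵇ ℝ), f ∈ R → const X c * f ∈ R
  approx : ∀ A : Set X, IsOpen A →
    ∃ f : ℕ → X →ᵇ ℝ, (∀ k, f k ∈ R) ∧ (∀ x, Monotone fun k => f k x) ∧
      ∀ x, Tendsto (fun k => f k x) atTop (𝓝 (A.indicator (fun _ => (1:ℝ)) x))

/-- The action of constant functions in `R` agrees with the real scalar multiplication. -/
def ConstSMulCompat {X : Type*} [TopologicalSpace X] (R : Subring (X →ᵇ ℝ)) (V : Type*)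
    [NormedAddCommGroup V] [NormedSpace ℝ V] [Module R V] : Prop :=
  ∀ (c : ℝ) (hc : const X c ∈ R) (v : V), (⟨const X c, hc⟩ : ↥R) • v = c • v

/-- The compatibility inequality defining a normed `R`-module. -/
def NormSMulCompat {X : Type*} [TopologicalSpace X] (R : Subring (X →ᵇ ℝ)) (V : Type*)
    [NormedAddCommGroup V] [Module R V] : Prop :=
  ∀ (s : Finset ℕ) (f : ℕ → ↥R) (v : ℕ → V) (M K : ℝ), 0 ≤ M → 0 ≤ K →
    ((s : Set ℕ).Pairwise fun i j =>
      Disjoint (tsupport ⇑((f i : X →ᵇ ℝ))) (tsupport ⇑((f j : X →ᵇ ℝ)))) →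
    (∀ i ∈ s, ‖(f i : X →ᵇ ℝ)‖ ≤ M) → (∀ i ∈ s, ‖v i‖ ≤ K) →
    ‖∑ i ∈ s, f i • v i‖ ≤ M * K

/-- The local seminorm `‖v‖_{|A}`. -/
def locNorm {X : Type*} [TopologicalSpace X] (R : Subring (X →ᵇ ℝ)) {V : Type*}
    [NormedAddCommGroup V] [Module R V] (A : Set X) (v : V) : ℝ :=
  sSup {r : ℝ | ∃ f : ↥R, tsupport ⇑((f : X →ᵇ ℝ)) ⊆ A ∧ ‖(f : X →ᵇ ℝ)‖ ≤ 1 ∧ r = ‖f • v‖}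

/-- The germ seminorm `|v|_g(x)`. -/
def germNorm {X : Type*} [TopologicalSpace X] (R : Subring (X →ᵇ ℝ)) {V : Type*}
    [NormedAddCommGroup V] [Module R V] (v : V) (x : X) : ℝ :=
  sInf {r : ℝ | ∃ A : Set X, IsOpen A ∧ x ∈ A ∧ r = locNorm R A v}

/-- `supp v ⊆ B`: there is a closed set `C ⊆ B` with `‖v‖_{|X∖C} = 0`. -/
def suppIn {X : Type*} [TopologicalSpace X] (R : Subring (X →ᵇ ℝ)) {V : Type*}
    [NormedAddCommGroup V] [Module R V] (v : V) (B : Set X) : Prop :=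
  ∃ C : Set X, IsClosed C ∧ C ⊆ B ∧ locNorm R Cᶜ v = 0

/-- σ-additivity, with convergence of the partial sums in norm. -/
def SigmaAdditive {X : Type*} [MeasurableSpace X] {E : Type*} [NormedAddCommGroup E]
    (N : Set X → E) : Prop :=
  ∀ A : ℕ → Set X, (∀ n, MeasurableSet (A n)) → Pairwise (Disjoint on A) →
    Tendsto (fun n => ∑ k ∈ Finset.range n, N (A k)) atTop (𝓝 (N (⋃ k, A k)))

/-- A local vector measure on the normed `R`-module `V`. -/
structure IsLocalVectorMeasure {X : Type*} [TopologicalSpace X] [MeasurableSpace X]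
    (R : Subring (X →ᵇ ℝ)) {V : Type*} [NormedAddCommGroup V] [NormedSpace ℝ V] [Module R V]
    (N : Set X → V →L[ℝ] ℝ) : Prop where
  sigma_additive : SigmaAdditive N
  weakly_local : ∀ A : Set X, IsOpen A → ∀ v : V, locNorm R A v = 0 → N A v = 0

/-- The total variation `|N|(B)`, as the supremum of `Σ ‖N(A_i)‖` over finite Borel
partitions of `B`. -/
def totalVar {X : Type*} [MeasurableSpace X] {E : Type*} [NormedAddCommGroup E]
    (N : Set X → E) (B : Set X) : ℝ≥0∞ :=
  ⨆ (n : ℕ) (A : Fin n → Set X)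
    (_ : (∀ i, MeasurableSet (A i)) ∧ Pairwise (Disjoint on A) ∧ (⋃ i, A i) = B),
      ∑ i, (‖N (A i)‖₊ : ℝ≥0∞)

/-- Tightness of a functional `F ∈ V'` with respect to `R`. -/
def IsTight {X : Type*} [TopologicalSpace X] (R : Subring (X →ᵇ ℝ)) {V : Type*}
    [NormedAddCommGroup V] [NormedSpace ℝ V] [Module R V] (F : V →L[ℝ] ℝ) : Prop :=
  ∀ (v : V) (f : ℕ → ↥R),
    (∀ x, Antitone fun n => ((f n : X →ᵇ ℝ)) x) →
    (∀ x, Tendsto (fun n => ((f n : X →ᵇ ℝ)) x) atTop (𝓝 (0:ℝ))) →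
    Tendsto (fun n => F ((f n) • v)) atTop (𝓝 (0:ℝ))

/-!
It suffices to show that `A ↦ ‖N A‖` is superadditive on disjoint Borel sets; summing over a
partition then bounds every variation sum of `B` by `‖N B‖`.

Given disjoint `A`, `B`, take unit vectors `v`, `w` almost norming `N A` and `N B`. The scalar
set functions `N(·) v` and `N(·) w` are signed measures, and the variations of these are finite,
hence regular, Borel measures. Regularity and normality give disjoint open sets `W₁ ≈ A` and
`W₂ ≈ B`. Approximate their indicators from below by `g₁ₖ, g₂ₖ ∈ R` supported in `W₁`, `W₂`.
Since the supports are disjoint, `‖g₁ₖ v + g₂ₖ w‖ ≤ 1`. Locality gives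
`N(E)(gₖ v) → N(E ∩ W) v`. Hence `‖N (A ∪ B)‖` is at least
`N(A ∪ B)(g₁ₖ v + g₂ₖ w) → N((A ∪ B) ∩ W₁) v + N((A ∪ B) ∩ W₂) w ≈ N A v + N B w`.
-/

theorem summable_of_forall_tendsto_indicator {a : ℕ → ℝ}
    (h : ∀ P : Set ℕ, ∃ L, Tendsto (fun n => ∑ k ∈ Finset.range n, P.indicator a k) atTop (𝓝 L)) :
    Summable a := by
  let P : Set ℕ := {k | 0 ≤ a k}
  obtain ⟨L₁, h₁⟩ := h P
  obtain ⟨L₂, h₂⟩ := h Pᶜ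
  have hP : Summable (P.indicator a) :=
    ((hasSum_iff_tendsto_nat_of_nonneg (indicator_nonneg fun k hk => hk) L₁).2 h₁).summable
  have hPc : Summable fun k => -Pᶜ.indicator a k := by
    refine ((hasSum_iff_tendsto_nat_of_nonneg (fun k => ?_) (-L₂)).2 ?_).summable
    · by_cases hk : k ∈ P
      · simp [hk]
      · simpa [hk, P] using (not_le.1 hk).le
    · simpa using h₂.neg
  simpa [P.indicator_self_add_compl a] using hP.add hPc.neg

namespace SigmaAdditive

variable {X : Type*} [MeasurableSpace X] {E : Type*} [NormedAddCommGroup E] {N : Set X → E}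

theorem empty (h : SigmaAdditive N) : N ∅ = 0 := by
  have hs := h (fun _ => ∅) (fun _ => .empty) fun _ _ _ => disjoint_bot_left
  simp only [iUnion_empty, Finset.sum_const, Finset.card_range] at hs
  have hsucc := (hs.comp (tendsto_add_atTop_nat 1)).sub hs
  simp only [Function.comp_def, succ_nsmul, add_sub_cancel_left, sub_self] at hsucc
  exact tendsto_nhds_unique tendsto_const_nhds hsucc

theorem union (h : SigmaAdditive N) {A B : Set X} (hA : MeasurableSet A) (hB : MeasurableSet B)
    (hAB : Disjoint A B) : N (A ∪ B) = N A + N B := by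
  let f : ℕ → Set X := fun | 0 => A | 1 => B | _ + 2 => ∅
  have hf : ∀ k, MeasurableSet (f k) := fun | 0 => hA | 1 => hB | _ + 2 => .empty
  have hfd : Pairwise (Disjoint on f) := by
    rintro (_ | _ | i) (_ | _ | j) hij <;> simp_all [Function.onFun, f, hAB.symm]
  have hfU : ⋃ k, f k = A ∪ B := by
    refine Subset.antisymm (iUnion_subset ?_) (union_subset (subset_iUnion f 0) (subset_iUnion f 1))
    rintro (_ | _ | k)
    exacts [subset_union_left, subset_union_right, empty_subset _]
  have hs := (h f hf hfd).comp (tendsto_add_atTop_nat 2)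
  simp only [Function.comp_def, Finset.sum_range_succ', hfU, f, h.empty, Finset.sum_const_zero,
    zero_add, tendsto_const_nhds_iff] at hs
  rw [← hs, add_comm]

theorem inter_add_diff (h : SigmaAdditive N) {T S : Set X} (hT : MeasurableSet T)
    (hS : MeasurableSet S) : N (T ∩ S) + N (T \ S) = N T := by
  rw [← h.union (hT.inter hS) (hT.diff hS) disjoint_sdiff_inter.symm, inter_union_sdiff]

theorem tendsto_of_monotone (h : SigmaAdditive N) {A : ℕ → Set X}
    (hA : ∀ n, MeasurableSet (A n)) (hmono : Monotone A) :
    Tendsto (fun n => N (A n)) atTop (𝓝 (N (⋃ n, A n))) := by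
  have hs := h _ (MeasurableSet.disjointed hA) (disjoint_disjointed A)
  rw [iUnion_disjointed] at hs
  have hpartial : ∀ n, ∑ k ∈ Finset.range (n + 1), N (disjointed A k) = N (A n) := by
    intro n
    induction n with
    | zero => simp [disjointed_zero]
    | succ n ih =>
      rw [Finset.sum_range_succ, ih, hmono.disjointed_add_one,
        ← h.union (hA n) ((hA (n + 1)).diff (hA n)) disjoint_sdiff_self_right,
        union_sdiff_cancel (hmono n.le_succ)]
  exact (hs.comp (tendsto_add_atTop_nat 1)).congr hpartial

theorem apply {V : Type*} [NormedAddCommGroup V] [NormedSpace ℝ V] {N : Set X → V →L[ℝ] ℝ}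
    (h : SigmaAdditive N) (v : V) : SigmaAdditive fun S => N S v := fun A hA hAd => by
  refine (((ContinuousLinearMap.apply ℝ ℝ v).continuous.tendsto _).comp (h A hA hAd)).congr ?_
  simp

variable {μ : Set X → ℝ}

/- `SigmaAdditive` only asserts convergence of the series in the given order; applying it to
every subfamily of the sets forces absolute convergence. -/
theorem summable (h : SigmaAdditive μ) {A : ℕ → Set X} (hA : ∀ n, MeasurableSet (A n))
    (hAd : Pairwise (Disjoint on A)) : Summable fun n => μ (A n) := by
  classical
  refine summable_of_forall_tendsto_indicator fun P => ?_
  let B : ℕ → Set X := fun k => if k ∈ P then A k else ∅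
  have hB : ∀ k, MeasurableSet (B k) := fun k => by
    by_cases hk : k ∈ P <;> simp [B, hk, hA k]
  have hBd : Pairwise (Disjoint on B) := fun i j hij => by
    by_cases hi : i ∈ P <;> by_cases hj : j ∈ P <;> simp [B, Function.onFun, hi, hj, hAd hij]
  refine ⟨_, (h B hB hBd).congr fun n => Finset.sum_congr rfl fun k _ => ?_⟩
  by_cases hk : k ∈ P <;> simp [B, hk, h.empty]

open scoped Classical in
def toSignedMeasure (h : SigmaAdditive μ) : SignedMeasure X where
  measureOf' S := if MeasurableSet S then μ S else 0
  empty' := by simp [h.empty]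
  not_measurable' _ hS := if_neg hS
  m_iUnion' A hA hAd := by
    simp only [hA, MeasurableSet.iUnion hA, if_true]
    exact ((h.summable hA hAd).hasSum_iff_tendsto_nat).2 (h A hA hAd)

theorem toSignedMeasure_apply (h : SigmaAdditive μ) {S : Set X} (hS : MeasurableSet S) :
    h.toSignedMeasure S = μ S :=
  if_pos hS

theorem exists_isFiniteMeasure_abs_le (h : SigmaAdditive μ) :
    ∃ ν : Measure X, IsFiniteMeasure ν ∧ ∀ S, MeasurableSet S → |μ S| ≤ ν.real S :=
  ⟨h.toSignedMeasure.totalVariation, inferInstance, fun S hS => by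
    simpa [h.toSignedMeasure_apply hS] using h.toSignedMeasure.norm_le_totalVariation S⟩

theorem abs_sub_le (h : SigmaAdditive μ) {ν : Measure X}
    (hν : ∀ S, MeasurableSet S → |μ S| ≤ ν.real S) {S T : Set X} (hS : MeasurableSet S)
    (hT : MeasurableSet T) : |μ S - μ T| ≤ ν.real (S \ T) + ν.real (T \ S) := by
  rw [← h.inter_add_diff hS hT, ← h.inter_add_diff hT hS, inter_comm, add_sub_add_left_eq_sub]
  exact (abs_sub _ _).trans (add_le_add (hν _ (hS.diff hT)) (hν _ (hT.diff hS)))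

end SigmaAdditive

section NormedModule

variable {X : Type*} [TopologicalSpace X] {R : Subring (X →ᵇ ℝ)}
  {V : Type*} [NormedAddCommGroup V] [Module R V]

theorem NormSMulCompat.norm_smul_le (hnorm : NormSMulCompat R V) (f : R) (v : V) :
    ‖f • v‖ ≤ ‖(f : X →ᵇ ℝ)‖ * ‖v‖ := by
  simpa using hnorm {0} (fun _ => f) (fun _ => v) _ _ (norm_nonneg _) (norm_nonneg _)
    (by simp) (fun _ _ => le_rfl) (fun _ _ => le_rfl)

theorem NormSMulCompat.norm_smul_add_smul_le (hnorm : NormSMulCompat R V) {f g : R}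
    (hfg : Disjoint (tsupport (f : X →ᵇ ℝ)) (tsupport (g : X →ᵇ ℝ))) {M K : ℝ}
    (hf : ‖(f : X →ᵇ ℝ)‖ ≤ M) (hg : ‖(g : X →ᵇ ℝ)‖ ≤ M) {v w : V} (hv : ‖v‖ ≤ K)
    (hw : ‖w‖ ≤ K) : ‖f • v + g • w‖ ≤ M * K := by
  have hpair : ((({0, 1} : Finset ℕ) : Set ℕ)).Pairwise fun i j =>
      Disjoint (tsupport (((if i = 0 then f else g : R)) : X →ᵇ ℝ))
        (tsupport (((if j = 0 then f else g : R)) : X →ᵇ ℝ)) := by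
    intro i hi j hj hij
    simp only [Finset.coe_insert, Finset.coe_singleton, mem_insert_iff, mem_singleton_iff] at hi hj
    rcases hi with rfl | rfl <;> rcases hj with rfl | rfl <;> simp_all [hfg.symm]
  have := hnorm {0, 1} (fun i => if i = 0 then f else g) (fun i => if i = 0 then v else w) M K
    ((norm_nonneg _).trans hf) ((norm_nonneg _).trans hv) hpair
    (by simp [hf, hg]) (by simp [hv, hw])
  simpa using this

theorem bddAbove_locNorm_set (hnorm : NormSMulCompat R V) (A : Set X) (v : V) :
    BddAbove {r : ℝ | ∃ f : R, tsupport ⇑(f : X →ᵇ ℝ) ⊆ A ∧ ‖(f : X →ᵇ ℝ)‖ ≤ 1 ∧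
      r = ‖f • v‖} := by
  refine ⟨‖v‖, ?_⟩
  rintro r ⟨f, -, hf, rfl⟩
  exact (hnorm.norm_smul_le f v).trans (mul_le_of_le_one_left (norm_nonneg v) hf)

theorem zero_mem_locNorm_set (A : Set X) (v : V) :
    (0 : ℝ) ∈ {r : ℝ | ∃ f : R, tsupport ⇑(f : X →ᵇ ℝ) ⊆ A ∧ ‖(f : X →ᵇ ℝ)‖ ≤ 1 ∧
      r = ‖f • v‖} :=
  ⟨0, by simp, by simp, by simp⟩

theorem locNorm_nonneg (hnorm : NormSMulCompat R V) (A : Set X) (v : V) :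
    0 ≤ locNorm R A v :=
  le_csSup (bddAbove_locNorm_set hnorm A v) (zero_mem_locNorm_set A v)

theorem locNorm_le {A : Set X} {v : V} {c : ℝ}
    (h : ∀ f : R, tsupport ⇑(f : X →ᵇ ℝ) ⊆ A → ‖(f : X →ᵇ ℝ)‖ ≤ 1 → ‖f • v‖ ≤ c) :
    locNorm R A v ≤ c :=
  csSup_le ⟨0, zero_mem_locNorm_set A v⟩ fun _ ⟨f, hA, hf, hr⟩ => hr ▸ h f hA hf

theorem locNorm_mono (hnorm : NormSMulCompat R V) {A B : Set X} (hAB : A ⊆ B) (v : V) :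
    locNorm R A v ≤ locNorm R B v :=
  csSup_le_csSup (bddAbove_locNorm_set hnorm B v) ⟨0, zero_mem_locNorm_set A v⟩
    fun _ ⟨f, hA, hf, hr⟩ => ⟨f, hA.trans hAB, hf, hr⟩

theorem locNorm_smul_eq_zero (hnorm : NormSMulCompat R V) {O : Set X} {f : R}
    (hf : ∀ x ∈ O, (f : X →ᵇ ℝ) x = 0) (v : V) : locNorm R O (f • v) = 0 := by
  refine le_antisymm (locNorm_le fun g hg _ => ?_) (locNorm_nonneg hnorm O _)
  have hgf : g * f = 0 := by
    ext x
    by_cases hx : x ∈ O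
    · simp [hf x hx]
    · simp [image_eq_zero_of_notMem_tsupport fun hmem => hx (hg hmem)]
  rw [← mul_smul, hgf, zero_smul, norm_zero]

end NormedModule

namespace IsLocalVectorMeasure

variable {X : Type*} [TopologicalSpace X] [MeasurableSpace X] [BorelSpace X]
  {R : Subring (X →ᵇ ℝ)} {V : Type*} [NormedAddCommGroup V] [NormedSpace ℝ V] [Module R V]
  {N : Set X → V →L[ℝ] ℝ}

theorem apply_eq_zero_of_subset (hnorm : NormSMulCompat R V) (hN : IsLocalVectorMeasure R N)
    {O : Set X} (hO : IsOpen O) {z : V} (hz : locNorm R O z = 0) {D : Set X}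
    (hD : MeasurableSet D) (hDO : D ⊆ O) : N D z = 0 := by
  have hsa := hN.sigma_additive
  suffices ∀ t, MeasurableSet t → N (O ∩ t) z = 0 by
    simpa [inter_eq_self_of_subset_right hDO] using this D hD
  refine fun t ht => MeasurableSpace.induction_on_inter (C := fun t _ => N (O ∩ t) z = 0)
    (BorelSpace.measurable_eq (α := X)) (fun _ hs _ ht _ => hs.inter ht) ?_ ?_ ?_ ?_ t ht
  · simp [hsa.empty]
  · intro t ht
    refine hN.weakly_local _ (hO.inter ht) z (le_antisymm ?_ (locNorm_nonneg hnorm _ z))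
    exact (locNorm_mono hnorm inter_subset_left z).trans_eq hz
  · intro t ht hOt
    have hOtc := congrArg (fun T => T z) (hsa.inter_add_diff hO.measurableSet ht)
    simp only [_root_.add_apply, hOt, hN.weakly_local O hO z hz, zero_add] at hOtc
    simpa [Set.sdiff_eq] using hOtc
  · intro A hAd hA hOA
    rw [inter_iUnion]
    refine tendsto_nhds_unique ((hsa.apply z) _ (fun i => hO.measurableSet.inter (hA i))
      fun i j hij => (hAd hij).mono inter_subset_right inter_subset_right) ?_
    simp [hOA]

theorem apply_smul_eq_zero (hnorm : NormSMulCompat R V) (hN : IsLocalVectorMeasure R N)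
    {O : Set X} (hO : IsOpen O) {f : R} (hf : ∀ x ∈ O, (f : X →ᵇ ℝ) x = 0) (v : V)
    {D : Set X} (hD : MeasurableSet D) (hDO : D ⊆ O) : N D (f • v) = 0 :=
  hN.apply_eq_zero_of_subset hnorm hO (locNorm_smul_eq_zero hnorm hf v) hD hDO

theorem norm_apply_smul_le (hR : ApproximatesOpenSets R) (hnorm : NormSMulCompat R V)
    (hN : IsLocalVectorMeasure R N) {F : Set X} (hF : MeasurableSet F) {h : R}
    (h0 : ∀ x, 0 ≤ (h : X →ᵇ ℝ) x) (h1 : ‖(h : X →ᵇ ℝ)‖ ≤ 1) {δ : ℝ} (hδ : 0 < δ) (v : V) :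
    ‖N F (h • v)‖ ≤ (‖N (F ∩ {x | (h : X →ᵇ ℝ) x < δ})‖ * δ
      + ‖N (F \ {x | (h : X →ᵇ ℝ) x < δ})‖) * ‖v‖ := by
  set O := {x | (h : X →ᵇ ℝ) x < δ}
  have hO : IsOpen O := isOpen_lt (h : X →ᵇ ℝ).continuous continuous_const
  -- on `O` the vector `h • v` agrees with `min h δ • v`, whose norm is at most `δ ‖v‖`
  obtain ⟨s, hsR, hs⟩ := hR.inf_mem h (const X δ) h.2 (hR.const_mem δ)
  let s' : R := ⟨s, hsR⟩
  have hs_norm : ‖s‖ ≤ δ := (norm_le hδ.le).2 fun x => by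
    rw [Real.norm_eq_abs, abs_le, hs]
    exact ⟨by simp [(neg_nonpos.2 hδ.le).trans (h0 x), hδ.le], by simp⟩
  have hloc : N (F ∩ O) ((h - s') • v) = 0 := by
    refine hN.apply_smul_eq_zero hnorm hO (fun x hx => ?_) v (hF.inter hO.measurableSet)
      inter_subset_right
    simp [s', hs, min_eq_left (le_of_lt (show (h : X →ᵇ ℝ) x < δ from hx))]
  have hsplit : N F (h • v) = N (F ∩ O) (s' • v) + N (F \ O) (h • v) := by
    rw [← hN.sigma_additive.inter_add_diff hF hO.measurableSet, _root_.add_apply]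
    congr 1
    rw [← add_sub_cancel s' h, add_smul, map_add, hloc, add_zero]
  calc ‖N F (h • v)‖ ≤ ‖N (F ∩ O)‖ * ‖s' • v‖ + ‖N (F \ O)‖ * ‖h • v‖ := by
        rw [hsplit]
        exact (norm_add_le _ _).trans (add_le_add ((N _).le_opNorm _) ((N _).le_opNorm _))
    _ ≤ ‖N (F ∩ O)‖ * (δ * ‖v‖) + ‖N (F \ O)‖ * (1 * ‖v‖) := by
        gcongr
        · exact (hnorm.norm_smul_le s' v).trans (by gcongr)
        · exact (hnorm.norm_smul_le h v).trans (by gcongr)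
    _ = (‖N (F ∩ O)‖ * δ + ‖N (F \ O)‖) * ‖v‖ := by ring

end IsLocalVectorMeasure

theorem BoundedContinuousFunction.norm_le_one_of_nonneg_of_le_one {X : Type*}
    [TopologicalSpace X] {f : X →ᵇ ℝ} (h0 : ∀ x, 0 ≤ f x) (h1 : ∀ x, f x ≤ 1) : ‖f‖ ≤ 1 :=
  (norm_le zero_le_one).2 fun x => by
    rw [Real.norm_eq_abs, abs_le]
    exact ⟨by linarith [h0 x], h1 x⟩

structure IsIndicatorApprox {X : Type*} [TopologicalSpace X] (R : Subring (X →ᵇ ℝ))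
    (W : Set X) (g : ℕ → R) : Prop where
  nonneg : ∀ k x, 0 ≤ (g k : X →ᵇ ℝ) x
  le_one : ∀ k x, (g k : X →ᵇ ℝ) x ≤ 1
  monotone : ∀ x, Monotone fun k => (g k : X →ᵇ ℝ) x
  tsupport_subset : ∀ k, tsupport (g k : X →ᵇ ℝ) ⊆ W
  tendsto_one : ∀ x ∈ W, Tendsto (fun k => (g k : X →ᵇ ℝ) x) atTop (𝓝 1)

theorem ApproximatesOpenSets.exists_isIndicatorApprox {X : Type*} [TopologicalSpace X]
    {R : Subring (X →ᵇ ℝ)} (hR : ApproximatesOpenSets R) {W : Set X} (hW : IsOpen W) :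
    ∃ g : ℕ → R, IsIndicatorApprox R W g := by
  obtain ⟨f, hfR, hfmono, hftend⟩ := hR.approx W hW
  have hf_le : ∀ k x, f k x ≤ W.indicator (fun _ => (1 : ℝ)) x := fun k x =>
    (hfmono x).ge_of_tendsto (hftend x) k
  have hf_le_one : ∀ k x, f k x ≤ 1 := fun k x =>
    (hf_le k x).trans (indicator_le_self' (fun _ _ => zero_le_one) x)
  -- `max (2 f_k - 1) 0` vanishes off the closed set `{f_k ≥ 1/2}`, which lies inside `W`
  have hex : ∀ k, ∃ h ∈ R, ∀ x, h x = max (2 * f k x - 1) 0 := fun k => by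
    obtain ⟨h, hhR, hh⟩ := hR.sup_mem _ _
      (R.sub_mem (hR.const_mul_mem 2 (f k) (hfR k)) (hR.const_mem 1)) (hR.const_mem 0)
    exact ⟨h, hhR, fun x => by simp [hh]⟩
  choose h hhR hh using hex
  refine ⟨fun k => ⟨h k, hhR k⟩, fun k x => ?_, fun k x => ?_, fun x k l hkl => ?_,
    fun k => ?_, fun x hx => ?_⟩
  · simp [hh]
  · simp only [hh]
    exact max_le (by linarith [hf_le_one k x]) zero_le_one
  · simp only [hh]
    exact max_le_max (by linarith [hfmono x hkl]) le_rfl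
  · have hsupp : Function.support (h k) ⊆ {x | 1 / 2 ≤ f k x} := fun x hx => by
      by_contra hlt
      simp only [mem_ofPred_eq, not_le] at hlt
      exact hx (by rw [hh]; exact max_eq_right (by linarith))
    have hW' : {x | 1 / 2 ≤ f k x} ⊆ W := fun x hx => by
      by_contra hxW
      have := hf_le k x
      rw [indicator_of_notMem hxW] at this
      linarith [show (1 / 2 : ℝ) ≤ f k x from hx]
    exact (closure_minimal hsupp (isClosed_le continuous_const (f k).continuous)).trans hW'
  · have hf1 : Tendsto (fun k => f k x) atTop (𝓝 1) := by
      simpa [indicator_of_mem hx] using hftend x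
    have := ((hf1.const_mul 2).sub_const 1).max (tendsto_const_nhds (x := (0 : ℝ)))
    norm_num at this
    simpa [hh] using this

namespace IsIndicatorApprox

variable {X : Type*} [TopologicalSpace X] {R : Subring (X →ᵇ ℝ)} {W : Set X} {g : ℕ → R}

theorem norm_le_one (hg : IsIndicatorApprox R W g) (k : ℕ) : ‖(g k : X →ᵇ ℝ)‖ ≤ 1 :=
  norm_le_one_of_nonneg_of_le_one (hg.nonneg k) (hg.le_one k)

variable [MeasurableSpace X] [BorelSpace X] {V : Type*} [NormedAddCommGroup V]
  [NormedSpace ℝ V] [Module R V] {N : Set X → V →L[ℝ] ℝ}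

theorem tendsto_apply_one_sub_smul (hR : ApproximatesOpenSets R) (hnorm : NormSMulCompat R V)
    (hN : IsLocalVectorMeasure R N) (hg : IsIndicatorApprox R W g) {F : Set X}
    (hF : MeasurableSet F) (hFW : F ⊆ W) (v : V) :
    Tendsto (fun k => N F ((1 - g k) • v)) atTop (𝓝 0) := by
  have hsa := hN.sigma_additive
  have hcoe : ∀ k x, ((1 - g k : R) : X →ᵇ ℝ) x = 1 - (g k : X →ᵇ ℝ) x := by simp
  rw [NormedAddGroup.tendsto_nhds_zero]
  intro ε hε
  obtain ⟨δ, hδ, hδε⟩ := exists_pos_mul_lt hε (‖N F‖ * ‖v‖)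
  let O : ℕ → Set X := fun k => {x | ((1 - g k : R) : X →ᵇ ℝ) x < δ}
  have hO : ∀ k, MeasurableSet (O k) := fun k =>
    (isOpen_lt ((1 - g k : R) : X →ᵇ ℝ).continuous continuous_const).measurableSet
  have hOmono : Monotone fun k => F ∩ O k := fun k l hkl x ⟨hxF, hxO⟩ =>
    ⟨hxF, by simp only [O, mem_ofPred_eq, hcoe] at hxO ⊢; linarith [hg.monotone x hkl]⟩
  have hOU : ⋃ k, F ∩ O k = F := by
    refine Subset.antisymm (iUnion_subset fun k => inter_subset_left) fun x hx => ?_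
    have hto : Tendsto (fun k => ((1 - g k : R) : X →ᵇ ℝ) x) atTop (𝓝 0) := by
      simpa [hcoe] using (hg.tendsto_one x (hFW hx)).const_sub 1
    obtain ⟨k, hk⟩ := (hto.eventually_lt_const hδ).exists
    exact mem_iUnion.2 ⟨k, hx, hk⟩
  have hin : Tendsto (fun k => N (F ∩ O k)) atTop (𝓝 (N F)) := by
    simpa only [hOU] using hsa.tendsto_of_monotone (fun k => hF.inter (hO k)) hOmono
  have hout : Tendsto (fun k => N (F \ O k)) atTop (𝓝 0) := by
    refine (sub_self (N F) ▸ tendsto_const_nhds.sub hin).congr fun k => ?_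
    rw [← hsa.inter_add_diff hF (hO k), add_sub_cancel_left]
  have hbound : Tendsto (fun k => (‖N (F ∩ O k)‖ * δ + ‖N (F \ O k)‖) * ‖v‖) atTop
      (𝓝 ((‖N F‖ * δ + 0) * ‖v‖)) :=
    ((hin.norm.mul_const δ).add (norm_zero (E := V →L[ℝ] ℝ) ▸ hout.norm)).mul_const _
  filter_upwards [hbound.eventually (gt_mem_nhds (show (‖N F‖ * δ + 0) * ‖v‖ < ε by
    rwa [add_zero, mul_right_comm]))] with k hk
  refine (hN.norm_apply_smul_le hR hnorm hF (fun x => ?_) ?_ hδ v).trans_lt hk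
  · simp [hg.le_one k x]
  · exact norm_le_one_of_nonneg_of_le_one (fun x => by simp [hg.le_one k x])
      (fun x => by simp [hg.nonneg k x])

theorem tendsto_apply_smul (hR : ApproximatesOpenSets R) (hnorm : NormSMulCompat R V)
    (hN : IsLocalVectorMeasure R N) (hW : IsOpen W) (hg : IsIndicatorApprox R W g)
    {E : Set X} (hE : MeasurableSet E) (v : V) :
    Tendsto (fun k => N E (g k • v)) atTop (𝓝 (N (E ∩ W) v)) := by
  have hout : ∀ k, N (E \ W) (g k • v) = 0 := fun k =>
    hN.apply_smul_eq_zero hnorm (isClosed_tsupport _).isOpen_compl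
      (fun x hx => image_eq_zero_of_notMem_tsupport hx) v (hE.diff hW.measurableSet)
      fun x hx hmem => hx.2 (hg.tsupport_subset k hmem)
  have hsplit : ∀ k, N E (g k • v) = N (E ∩ W) v - N (E ∩ W) ((1 - g k) • v) := fun k => by
    rw [← hN.sigma_additive.inter_add_diff hE hW.measurableSet, _root_.add_apply, hout,
      add_zero, sub_smul, one_smul, map_sub]
    ring
  simpa [hsplit] using tendsto_const_nhds.sub
    (hg.tendsto_apply_one_sub_smul hR hnorm hN (hE.inter hW.measurableSet) inter_subset_right v)

end IsIndicatorApprox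

theorem MeasureTheory.exists_disjoint_isOpen_approx {X : Type*} [TopologicalSpace X]
    [NormalSpace X] [MeasurableSpace X] [OpensMeasurableSpace X] (ν₁ ν₂ : Measure X)
    [IsFiniteMeasure ν₁] [IsFiniteMeasure ν₂] [ν₁.WeaklyRegular] [ν₂.WeaklyRegular]
    {A B : Set X} (hA : MeasurableSet A) (hB : MeasurableSet B) (hAB : Disjoint A B)
    {ε : ℝ≥0∞} (hε : ε ≠ 0) :
    ∃ W₁ W₂ : Set X, IsOpen W₁ ∧ IsOpen W₂ ∧ Disjoint W₁ W₂ ∧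
      ν₁ (A \ W₁) < ε ∧ ν₁ (W₁ \ A) < ε ∧ ν₂ (B \ W₂) < ε ∧ ν₂ (W₂ \ B) < ε := by
  obtain ⟨C₁, hC₁A, hC₁, hAC₁⟩ := hA.exists_isClosed_sdiff_lt (measure_ne_top ν₁ A) hε
  obtain ⟨C₂, hC₂B, hC₂, hBC₂⟩ := hB.exists_isClosed_sdiff_lt (measure_ne_top ν₂ B) hε
  obtain ⟨G₁, G₂, hG₁, hG₂, hCG₁, hCG₂, hG⟩ :=
    normal_separation hC₁ hC₂ (hAB.mono hC₁A hC₂B)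
  obtain ⟨H₁, hCH₁, hH₁, -, hHC₁⟩ :=
    hC₁.measurableSet.exists_isOpen_sdiff_lt (measure_ne_top ν₁ C₁) hε
  obtain ⟨H₂, hCH₂, hH₂, -, hHC₂⟩ :=
    hC₂.measurableSet.exists_isOpen_sdiff_lt (measure_ne_top ν₂ C₂) hε
  refine ⟨G₁ ∩ H₁, G₂ ∩ H₂, hG₁.inter hH₁, hG₂.inter hH₂,
    hG.mono inter_subset_left inter_subset_left, ?_, ?_, ?_, ?_⟩
  · exact (measure_mono (sdiff_subset_sdiff_right (subset_inter hCG₁ hCH₁))).trans_lt hAC₁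
  · exact (measure_mono (sdiff_subset_sdiff inter_subset_right hC₁A)).trans_lt hHC₁
  · exact (measure_mono (sdiff_subset_sdiff_right (subset_inter hCG₂ hCH₂))).trans_lt hBC₂
  · exact (measure_mono (sdiff_subset_sdiff inter_subset_right hC₂B)).trans_lt hHC₂

theorem ContinuousLinearMap.exists_norm_le_one_lt_apply {V : Type*} [NormedAddCommGroup V]
    [NormedSpace ℝ V] (T : V →L[ℝ] ℝ) {r : ℝ} (hr : r < ‖T‖) : ∃ v : V, ‖v‖ ≤ 1 ∧ r < T v := by
  obtain ⟨x, hx, hrx⟩ := T.exists_lt_apply_of_lt_opNorm hr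
  rcases le_or_gt 0 (T x) with hTx | hTx
  · exact ⟨x, hx.le, by rwa [Real.norm_eq_abs, abs_of_nonneg hTx] at hrx⟩
  · exact ⟨-x, by simpa using hx.le, by rwa [map_neg, ← abs_of_neg hTx, ← Real.norm_eq_abs]⟩

namespace IsLocalVectorMeasure

variable {X : Type*} [MetricSpace X] [MeasurableSpace X] [BorelSpace X]
  {R : Subring (X →ᵇ ℝ)} {V : Type*} [NormedAddCommGroup V] [NormedSpace ℝ V] [Module R V]
  {N : Set X → V →L[ℝ] ℝ}

theorem norm_add_norm_le_norm_union (hR : ApproximatesOpenSets R) (hnorm : NormSMulCompat R V)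
    (hN : IsLocalVectorMeasure R N) {A B : Set X} (hA : MeasurableSet A) (hB : MeasurableSet B)
    (hAB : Disjoint A B) : ‖N A‖ + ‖N B‖ ≤ ‖N (A ∪ B)‖ := by
  refine le_of_forall_pos_le_add fun ε hε => ?_
  have hε' : 0 < ε / 6 := by positivity
  obtain ⟨v, hv, hNv⟩ := (N A).exists_norm_le_one_lt_apply (sub_lt_self ‖N A‖ hε')
  obtain ⟨w, hw, hNw⟩ := (N B).exists_norm_le_one_lt_apply (sub_lt_self ‖N B‖ hε')
  obtain ⟨ν₁, _, hν₁⟩ := (hN.sigma_additive.apply v).exists_isFiniteMeasure_abs_le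
  obtain ⟨ν₂, _, hν₂⟩ := (hN.sigma_additive.apply w).exists_isFiniteMeasure_abs_le
  obtain ⟨W₁, W₂, hW₁, hW₂, hW, hAW₁, hW₁A, hBW₂, hW₂B⟩ :=
    exists_disjoint_isOpen_approx ν₁ ν₂ hA hB hAB (ENNReal.ofReal_pos.2 hε').ne'
  obtain ⟨g₁, hg₁⟩ := hR.exists_isIndicatorApprox hW₁
  obtain ⟨g₂, hg₂⟩ := hR.exists_isIndicatorApprox hW₂
  set U := A ∪ B
  have hU : MeasurableSet U := hA.union hB
  have hlim : N (U ∩ W₁) v + N (U ∩ W₂) w ≤ ‖N U‖ := by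
    refine le_of_tendsto' ((hg₁.tendsto_apply_smul hR hnorm hN hW₁ hU v).add
      (hg₂.tendsto_apply_smul hR hnorm hN hW₂ hU w)) fun k => ?_
    have hk : ‖g₁ k • v + g₂ k • w‖ ≤ 1 := by
      simpa using hnorm.norm_smul_add_smul_le
        (hW.mono (hg₁.tsupport_subset k) (hg₂.tsupport_subset k))
        (hg₁.norm_le_one k) (hg₂.norm_le_one k) hv hw
    rw [← map_add]
    exact (le_abs_self _).trans (((N U).le_opNorm_of_le hk).trans_eq (mul_one _))
  have herr : ∀ (ν : Measure X) [IsFiniteMeasure ν] (u : V),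
      (∀ S, MeasurableSet S → |N S u| ≤ ν.real S) → ∀ {C W : Set X}, MeasurableSet C →
      C ⊆ U → IsOpen W → ν (C \ W) < .ofReal (ε / 6) → ν (W \ C) < .ofReal (ε / 6) →
      |N (U ∩ W) u - N C u| < ε / 6 + ε / 6 := by
    intro ν _ u hν C W hC hCU hW hCW hWC
    refine ((hN.sigma_additive.apply u).abs_sub_le hν (hU.inter hW.measurableSet) hC).trans_lt
      (add_lt_add ?_ ?_)
    · exact (measureReal_mono (show (U ∩ W) \ C ⊆ W \ C from fun x hx => ⟨hx.1.2, hx.2⟩)).trans_lt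
        (ENNReal.toReal_lt_of_lt_ofReal hWC)
    · exact (measureReal_mono (show C \ (U ∩ W) ⊆ C \ W from
        fun x hx => ⟨hx.1, fun h => hx.2 ⟨hCU hx.1, h⟩⟩)).trans_lt
        (ENNReal.toReal_lt_of_lt_ofReal hCW)
  have herr₁ := herr ν₁ v hν₁ hA subset_union_left hW₁ hAW₁ hW₁A
  have herr₂ := herr ν₂ w hν₂ hB subset_union_right hW₂ hBW₂ hW₂B
  linarith [abs_lt.1 herr₁, abs_lt.1 herr₂]

end IsLocalVectorMeasure

section Superadditive

variable {X : Type*} [MeasurableSpace X] {E : Type*} [NormedAddCommGroup E] {N : Set X → E}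

theorem sum_norm_le_norm_biUnion_of_superadditive
    (hsup : ∀ A B, MeasurableSet A → MeasurableSet B → Disjoint A B →
      ‖N A‖ + ‖N B‖ ≤ ‖N (A ∪ B)‖) {ι : Type*} (s : Finset ι) {A : ι → Set X}
    (hA : ∀ i ∈ s, MeasurableSet (A i)) (hAd : (s : Set ι).PairwiseDisjoint A) :
    ∑ i ∈ s, ‖N (A i)‖ ≤ ‖N (⋃ i ∈ s, A i)‖ := by
  classical
  induction s using Finset.induction_on with
  | empty => simp
  | insert a s ha ih =>
    rw [Finset.forall_mem_insert] at hA
    rw [Finset.sum_insert ha, Finset.set_biUnion_insert]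
    refine (add_le_add le_rfl (ih hA.2 (hAd.subset (by simp)))).trans
      (hsup _ _ hA.1 (s.measurableSet_biUnion hA.2) ?_)
    exact disjoint_iUnion₂_right.2 fun i hi =>
      hAd (by simp) (by simp [hi]) fun hai => ha (hai ▸ hi)

theorem totalVar_eq_nnnorm_of_superadditive
    (hsup : ∀ A B, MeasurableSet A → MeasurableSet B → Disjoint A B →
      ‖N A‖ + ‖N B‖ ≤ ‖N (A ∪ B)‖) {B : Set X} (hB : MeasurableSet B) :
    totalVar N B = ‖N B‖₊ := by
  refine le_antisymm (iSup₂_le fun n A => iSup_le fun ⟨hA, hAd, hAB⟩ => ?_) ?_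
  · have := sum_norm_le_norm_biUnion_of_superadditive hsup Finset.univ (fun i _ => hA i)
      (hAd.set_pairwise _)
    simp only [Finset.mem_univ, iUnion_true, hAB] at this
    rw [← ENNReal.ofNNReal_finsetSum, ENNReal.coe_le_coe, ← NNReal.coe_le_coe, NNReal.coe_sum]
    simpa using this
  · refine le_iSup₂_of_le 1 (fun _ => B) (le_iSup_of_le ⟨fun _ => hB,
      fun i j hij => absurd (Subsingleton.elim i j) hij, iUnion_const B⟩ ?_)
    simp

end Superadditive

theorem statement5_general {X : Type*} [MetricSpace X]
    [MeasurableSpace X] [BorelSpace X]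
    {V : Type*} [NormedAddCommGroup V] [NormedSpace ℝ V]
    (R : Subring (X →ᵇ ℝ)) [Module R V]
    (hR : ApproximatesOpenSets R) (hnorm : NormSMulCompat R V)
    (N : Set X → V →L[ℝ] ℝ) (hN : IsLocalVectorMeasure R N) :
    totalVar N Set.univ < ⊤ ∧
      ∀ A : Set X, MeasurableSet A → totalVar N A = (‖N A‖₊ : ℝ≥0∞) := by
  have hvar : ∀ A : Set X, MeasurableSet A → totalVar N A = ‖N A‖₊ := fun A =>
    totalVar_eq_nnnorm_of_superadditive fun _ _ => hN.norm_add_norm_le_norm_union hR hnorm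
  exact ⟨(hvar _ .univ).trans_lt ENNReal.coe_lt_top, hvar⟩

/-- a local vector measure has bounded variation, and in fact
`|N|(A) = ‖N(A)‖'` for every Borel set `A`. -/
theorem statement5 {X : Type*} [MetricSpace X] [CompleteSpace X]
    [TopologicalSpace.SeparableSpace X] [MeasurableSpace X] [BorelSpace X]
    {V : Type*} [NormedAddCommGroup V] [NormedSpace ℝ V]
    (R : Subring (X →ᵇ ℝ)) [Module R V]
    (hR : ApproximatesOpenSets R) (hconst : ConstSMulCompat R V) (hnorm : NormSMulCompat R V)
    (N : Set X → V →L[ℝ] ℝ) (hN : IsLocalVectorMeasure R N) :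
    totalVar N Set.univ < ⊤ ∧
      ∀ A : Set X, MeasurableSet A → totalVar N A = (‖N A‖₊ : ℝ≥0∞) :=
  statement5_general R hR hnorm N hN
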